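/- If a loop L satisfies at least one of the following conditions: (i) the left inverse property (there is a bijection x ↦ x^{-1} of L with x^{-1}·(x·y) = y for all x,y), (ii) the left alternative law (x·(x·y) = (x·x)·y for all x,y), (iii) flexibility (x·(y·x) = (x·y)·x for all x,y), then every middle and right nuclear normal subgroup G of L is nuclear, i.e. G is also contained in the left nucleus of L. -/

import Mathlib

universe u v

/-- A loop: a type with a multiplication all of whose left and right translations
are bijective, together with a two-sided identity element. -/
class MLoop (L : Type u) extends Mul L, One L where
  mul_left_bij : ∀ x : L, Function.Bijective fun y : L => x * y
  mul_right_bij : ∀ x : L, Function.Bijective fun y : L => y * x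
  one_mul : ∀ x : L, 1 * x = x
  mul_one : ∀ x : L, x * 1 = x

instance (L : Type u) [MLoop L] : Nonempty L := ⟨1⟩

/-- Left division `x \ y = λ_x⁻¹ y`. -/
noncomputable def MLoop.ldiv {L : Type u} [MLoop L] (x y : L) : L :=
  Function.invFun (fun z : L => x * z) y

/-- Right division `x / y = ρ_y⁻¹ x`. -/
noncomputable def MLoop.rdiv {L : Type u} [MLoop L] (x y : L) : L :=
  Function.invFun (fun z : L => z * y) x

/-- Middle inner mapping `T_x = ρ_x⁻¹ ∘ λ_x`, i.e. `T_x t` is the unique `z` with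
`z * x = x * t`. -/
noncomputable def MLoop.midInner {L : Type u} [MLoop L] (x t : L) : L :=
  Function.invFun (fun z : L => z * x) (x * t)

/-- The left nucleus of a multiplicative structure. -/
def leftNucleus (L : Type u) [Mul L] : Set L :=
  {u : L | ∀ x y : L, u * x * y = u * (x * y)}

/-- The right nucleus of a multiplicative structure. -/
def rightNucleus (L : Type u) [Mul L] : Set L :=
  {u : L | ∀ x y : L, x * y * u = x * (y * u)}

/-- The middle nucleus of a multiplicative structure. -/
def middleNucleus (L : Type u) [Mul L] : Set L :=
  {u : L | ∀ x y : L, x * u * y = x * (u * y)}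

/-- A subset of a loop is a normal subloop if it is the kernel of a loop homomorphism. -/
def IsNormalSubloop {L : Type u} [MLoop L] (N : Set L) : Prop :=
  ∃ (M : Type u) (i : MLoop M) (f : L → M),
    (∀ x y : L, f (x * y) = i.toMul.mul (f x) (f y)) ∧ N = {x : L | f x = i.toOne.one}

/-- The data `(Θ, f)` of a Schreier extension of the group `G` by the loop `K`. -/
structure SchreierData (K : Type u) (G : Type v) [MLoop K] [Group G] where
  Θ : K → G ≃* G
  f : K → K → G
  theta_one : Θ 1 = MulEquiv.refl G
  f_one_left : ∀ σ : K, f 1 σ = 1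
  f_one_right : ∀ σ : K, f σ 1 = 1

/-- The multiplication of the Schreier loop `L(Θ,f)` on `K × G`:
`(τ,t)∘(σ,s) = (τσ, f(τ,σ)·Θ_σ(t)·s)`. -/
def SchreierData.mul {K : Type u} {G : Type v} [MLoop K] [Group G]
    (D : SchreierData K G) (p q : K × G) : K × G :=
  (p.1 * q.1, D.f p.1 q.1 * D.Θ q.1 p.2 * q.2)

/-! In a left inverse property loop the middle nucleus is closed under the left inverse, and
`(u x)⁻¹ = x⁻¹ u⁻¹` for `u` in it; applying `λ_{(u x)⁻¹}` to `(u x) y` and to `u (x y)` gives `y`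
both times, so the middle nucleus lies in the left nucleus.

Otherwise let `conj c u` be the solution `z` of `c z = u c`. Pushing `u ∈ G` to the right through
`x` and then `y` gives `(u x) y = (x y) conj y (conj x u)`, while `u (x y) = (x y) conj (x y) u`,
so `u` is left nuclear as soon as `conj (x y) u = conj y (conj x u)`. Expanding both sides of the
left alternative law `(x u) ((x u) y) = ((x u) (x u)) y`, respectively of the flexible law in the
form `(y u) (x (y u)) = ((y u) x) (y u)`, by the same pushing rules yields exactly this identity. -/

namespace MLoop

variable {L : Type u} [MLoop L]

theorem mul_left_cancel {x y z : L} (h : x * y = x * z) : y = z :=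
  (mul_left_bij x).1 h

theorem mul_right_cancel {x y z : L} (h : y * x = z * x) : y = z :=
  (mul_right_bij x).1 h

theorem mul_ldiv (x y : L) : x * ldiv x y = y :=
  Function.rightInverse_invFun (mul_left_bij x).2 y

noncomputable def conj (c u : L) : L := ldiv c (u * c)

theorem mul_conj (c u : L) : c * conj c u = u * c :=
  mul_ldiv c (u * c)

theorem conj_mem_of_isNormalSubloop {G : Set L} (hG : IsNormalSubloop G) (c : L) {u : L}
    (hu : u ∈ G) : conj c u ∈ G := by
  obtain ⟨M, iM, f, hf, rfl⟩ := hG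
  let _ : MLoop M := iM
  have hf : ∀ x y : L, f (x * y) = f x * f y := hf
  change f u = 1 at hu
  change f (conj c u) = 1
  apply mul_left_cancel (x := f c)
  rw [← hf, mul_conj, hf, hu, MLoop.one_mul, MLoop.mul_one]

theorem middleNucleus_subset_leftNucleus_of_leftInverse (inv : L → L)
    (hinv : ∀ x y : L, inv x * (x * y) = y) : middleNucleus L ⊆ leftNucleus L := by
  have inv_mul_self (x : L) : inv x * x = 1 := by simpa only [MLoop.mul_one] using hinv x 1
  have inv_inv (x : L) : inv (inv x) = x := by
    simpa only [inv_mul_self, MLoop.mul_one] using hinv (inv x) x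
  have mul_inv_mul (x y : L) : x * (inv x * y) = y := by simpa only [inv_inv] using hinv (inv x) y
  have mul_inv_self (x : L) : x * inv x = 1 := by
    simpa only [MLoop.mul_one] using mul_inv_mul x 1
  intro u hu x y
  have hu' : inv u ∈ middleNucleus L := fun a b => by
    have mul_inv_mul_self : a * inv u * u = a := mul_right_cancel (x := inv u) <| by
      rw [hu (a * inv u) (inv u), mul_inv_self, MLoop.mul_one]
    calc a * inv u * b = a * inv u * (u * (inv u * b)) := by rw [mul_inv_mul]
      _ = a * inv u * u * (inv u * b) := (hu _ _).symm
      _ = a * (inv u * b) := by rw [mul_inv_mul_self]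
  have inv_mul : inv (u * x) = inv x * inv u :=
    mul_right_cancel (x := u * x) <| by rw [inv_mul_self, hu', hinv, inv_mul_self]
  apply mul_left_cancel (x := inv (u * x))
  rw [hinv, inv_mul, hu', hinv, hinv]

end MLoop

open MLoop

structure IsMidRightNuclearNormal {L : Type u} [MLoop L] (G : Set L) : Prop where
  subset_middleNucleus : G ⊆ middleNucleus L
  subset_rightNucleus : G ⊆ rightNucleus L
  mul_mem : ∀ {a b : L}, a ∈ G → b ∈ G → a * b ∈ G
  conj_mem : ∀ (c : L) {u : L}, u ∈ G → conj c u ∈ G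

namespace IsMidRightNuclearNormal

variable {L : Type u} [MLoop L] {G : Set L}

theorem mul_mul_eq_mul_mul_conj (hG : IsMidRightNuclearNormal G) {g : L} (hg : g ∈ G)
    (a b : L) : a * g * b = a * b * conj b g := by
  rw [hG.subset_middleNucleus hg a b, ← mul_conj b g,
    ← hG.subset_rightNucleus (hG.conj_mem b hg) a b]

theorem mul_mul_mul_eq_mul_mul_conj_mul (hG : IsMidRightNuclearNormal G) {g h : L} (hg : g ∈ G)
    (hh : h ∈ G) (a b : L) : a * g * (b * h) = a * b * (conj b g * h) := by
  have hgh : conj b g * h ∈ G := hG.mul_mem (hG.conj_mem b hg) hh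
  rw [hG.subset_middleNucleus hg a, ← hG.subset_rightNucleus hh g b, ← mul_conj b g,
    hG.subset_middleNucleus (hG.conj_mem b hg) b h, ← hG.subset_rightNucleus hgh a b]

theorem conj_mul (hG : IsMidRightNuclearNormal G) {g h : L} (hg : g ∈ G) (hh : h ∈ G) (c : L) :
    conj c (g * h) = conj c g * conj c h := by
  apply mul_left_cancel (x := c)
  rw [mul_conj, hG.mul_mul_eq_mul_mul_conj hh g c, ← mul_conj c g,
    hG.subset_middleNucleus (hG.conj_mem c hg) c (conj c h)]

theorem mem_leftNucleus (hG : IsMidRightNuclearNormal G) {u : L} (hu : u ∈ G)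
    (hconj : ∀ x y : L, conj (x * y) u = conj y (conj x u)) : u ∈ leftNucleus L := by
  intro x y
  rw [← mul_conj x u, hG.mul_mul_eq_mul_mul_conj (hG.conj_mem x hu) x y, ← hconj, mul_conj]

theorem conj_mul_of_leftAlternative (hG : IsMidRightNuclearNormal G)
    (halt : ∀ x y : L, x * (x * y) = x * x * y) {u : L} (hu : u ∈ G) (x y : L) :
    conj (x * y) u = conj y (conj x u) := by
  have hux := hG.conj_mem x hu
  have key : x * x * y * (conj (x * y) u * conj y u) =
      x * x * y * (conj y (conj x u) * conj y u) := by
    calc x * x * y * (conj (x * y) u * conj y u)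
        = x * u * (x * u * y) := by
          rw [hG.mul_mul_eq_mul_mul_conj hu x y,
            hG.mul_mul_mul_eq_mul_mul_conj_mul hu (hG.conj_mem y hu) x (x * y), halt x y]
      _ = x * u * (x * u) * y := halt _ _
      _ = x * x * y * (conj y (conj x u) * conj y u) := by
          rw [hG.mul_mul_mul_eq_mul_mul_conj_mul hu hu x x,
            hG.mul_mul_eq_mul_mul_conj (hG.mul_mem hux hu) (x * x) y, hG.conj_mul hux hu]
  exact mul_right_cancel (mul_left_cancel key)

theorem conj_mul_of_flexible (hG : IsMidRightNuclearNormal G)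
    (hflex : ∀ x y : L, x * (y * x) = x * y * x) {u : L} (hu : u ∈ G) (x y : L) :
    conj (x * y) u = conj y (conj x u) := by
  have key : y * (x * y) * (conj (x * y) u * u) = y * x * y * (conj y (conj x u) * u) := by
    calc y * (x * y) * (conj (x * y) u * u)
        = y * u * (x * y * u) := (hG.mul_mul_mul_eq_mul_mul_conj_mul hu hu _ _).symm
      _ = y * u * (x * (y * u)) := by rw [hG.subset_rightNucleus hu x y]
      _ = y * u * x * (y * u) := hflex _ _
      _ = y * x * y * (conj y (conj x u) * u) := by
          rw [hG.mul_mul_eq_mul_mul_conj hu y x,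
            hG.mul_mul_mul_eq_mul_mul_conj_mul (hG.conj_mem x hu) hu (y * x) y]
  rw [hflex y x] at key
  exact mul_right_cancel (mul_left_cancel key)

end IsMidRightNuclearNormal

theorem schreier_stmt13_general {L : Type u} [MLoop L]
    (hprop :
      (∃ inv : L → L, Function.Bijective inv ∧ ∀ x y : L, inv x * (x * y) = y) ∨
      (∀ x y : L, x * (x * y) = (x * x) * y) ∨
      (∀ x y : L, x * (y * x) = (x * y) * x))
    (G : Set L) [Group G]
    (hGmul : ∀ a b : G, ((a * b : G) : L) = (a : L) * (b : L))
    (hnorm : IsNormalSubloop G)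
    (hnuc : G ⊆ middleNucleus L ∩ rightNucleus L) :
    G ⊆ leftNucleus L := by
  have hG : IsMidRightNuclearNormal G :=
    { subset_middleNucleus := fun _ hu => (hnuc hu).1
      subset_rightNucleus := fun _ hu => (hnuc hu).2
      mul_mem := fun ha hb => hGmul ⟨_, ha⟩ ⟨_, hb⟩ ▸ (⟨_, ha⟩ * ⟨_, hb⟩ : G).2
      conj_mem := conj_mem_of_isNormalSubloop hnorm }
  rcases hprop with ⟨inv, -, hinv⟩ | halt | hflex
  · exact fun u hu => middleNucleus_subset_leftNucleus_of_leftInverse inv hinv (hnuc hu).1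
  · exact fun u hu => hG.mem_leftNucleus hu (hG.conj_mul_of_leftAlternative halt hu)
  · exact fun u hu => hG.mem_leftNucleus hu (hG.conj_mul_of_flexible hflex hu)

/-- if a loop `L` has the left inverse property, or is left alternative,
or is flexible, then every middle and right nuclear normal subgroup `G` of `L` is
nuclear, i.e. `G` is also contained in the left nucleus of `L`. -/
theorem schreier_stmt13 {L : Type u} [MLoop L]
    (hprop :
      (∃ inv : L → L, Function.Bijective inv ∧ ∀ x y : L, inv x * (x * y) = y) ∨
      (∀ x y : L, x * (x * y) = (x * x) * y) ∨
      (∀ x y : L, x * (y * x) = (x * y) * x))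
    (G : Set L) [Group G]
    (hGmul : ∀ a b : G, ((a * b : G) : L) = (a : L) * (b : L))
    (hGone : ((1 : G) : L) = 1)
    (hnorm : IsNormalSubloop G)
    (hnuc : G ⊆ middleNucleus L ∩ rightNucleus L) :
    G ⊆ leftNucleus L :=
  schreier_stmt13_general hprop G hGmul hnorm hnuc
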